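/- arXiv:2103.10497 — 6 statements merged into one kernel-verified Lean document; each statement's English description precedes it below -/
import Mathlib

section
/- For every positive integer k and every integer r ≥ 2, every family of k-element sets with Littlestone dimension at most 1 and cardinality at least k + r - 1 contains an r-sunflower. -/
open Finset

variable {α : Type*}

/-- An `r`-sunflower: `r` distinct sets with pairwise equal intersections. -/
def IsSunflower [DecidableEq α] (r : ℕ) (𝒮 : Finset (Finset α)) : Prop :=
  𝒮.card = r ∧ ∃ C : Finset α, ∀ A ∈ 𝒮, ∀ B ∈ 𝒮, A ≠ B → A ∩ B = C

/-- The family `F` contains an `r`-sunflower. -/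
def HasSunflower [DecidableEq α] (F : Finset (Finset α)) (r : ℕ) : Prop :=
  ∃ 𝒮 ⊆ F, IsSunflower r 𝒮

/-- `F` shatters `S`: every subset of `S` is the trace of some member of `F` on `S`. -/
def ShattersFam [DecidableEq α] (F : Finset (Finset α)) (S : Finset α) : Prop :=
  ∀ B ⊆ S, ∃ A ∈ F, A ∩ S = B

/-- The VC-dimension of `F` is at most `d`. -/
def VCdimLE [DecidableEq α] (F : Finset (Finset α)) (d : ℕ) : Prop :=
  ∀ S : Finset α, ShattersFam F S → S.card ≤ d

/-- The Littlestone dimension of `F` is at most `d` (recursive definition). -/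
def LdimLE [DecidableEq α] : ℕ → Finset (Finset α) → Prop
  | 0, F => F.card ≤ 1
  | d + 1, F => F.card ≤ 1 ∨ ∀ x : α,
      LdimLE d ((F.filter (fun S => x ∈ S)).image (fun S => S.erase x)) ∨
      LdimLE d (F.filter (fun S => x ∉ S))

/-- `λ(G) ≥ l`: there are `l` distinct sets in `G` such that every pair has a
private common element, belonging to no other of the `l` sets. -/
def HasLambda [DecidableEq α] (G : Finset (Finset α)) (l : ℕ) : Prop :=
  ∃ S : Fin l → Finset α, (∀ i, S i ∈ G) ∧ Function.Injective S ∧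
    ∀ i j : Fin l, i < j → ∃ v, v ∈ S i ∧ v ∈ S j ∧
      ∀ t : Fin l, t ≠ i → t ≠ j → v ∉ S t

/-!
If every element lies in at most one member of `F`, the members are pairwise disjoint and any `r`
of them form a sunflower with empty kernel. Otherwise some `x` lies in at least two members, so at
most one member misses `x`. The link of `x` (the members containing `x`, with `x` removed) is then
a family of `(k - 1)`-sets in which, again, every element lies in at most one member or is missed
by at most one, and it has at least `k + r - 2` members; by induction on `k` it contains an
`r`-sunflower, and putting `x` back gives one in `F`.
-/

section

variable [DecidableEq α] {F G 𝒮 : Finset (Finset α)} {r k : ℕ} {x : α}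

def InAlmostNoneOrAll (F : Finset (Finset α)) : Prop :=
  ∀ x, #{S ∈ F | x ∈ S} ≤ 1 ∨ #{S ∈ F | x ∉ S} ≤ 1

theorem InAlmostNoneOrAll.of_ldimLE_one (h : LdimLE 1 F) : InAlmostNoneOrAll F := by
  rcases h with h | h
  · exact fun x => Or.inl ((card_le_card (filter_subset _ F)).trans h)
  · intro x
    refine (h x).imp (fun hx => ?_) id
    have hinj : Set.InjOn (erase · x) ({S ∈ F | x ∈ S} : Finset (Finset α)) :=
      (erase_injOn' x).mono fun S hS => (mem_filter.mp hS).2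
    rwa [LdimLE, card_image_of_injOn hinj] at hx

theorem InAlmostNoneOrAll.mono (hF : InAlmostNoneOrAll F) (hGF : G ⊆ F) : InAlmostNoneOrAll G :=
  fun x => (hF x).imp (card_le_card (filter_subset_filter _ hGF)).trans
    (card_le_card (filter_subset_filter _ hGF)).trans

theorem InAlmostNoneOrAll.image_erase (hF : InAlmostNoneOrAll F) (x : α) :
    InAlmostNoneOrAll (F.image (erase · x)) := by
  intro y
  rcases eq_or_ne y x with rfl | hyx
  · left
    rw [filter_image, filter_false_of_mem fun S _ => notMem_erase y S]
    simp
  · rw [filter_image, filter_image]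
    refine (hF y).imp (fun h => card_image_le.trans ?_) (fun h => card_image_le.trans ?_) <;>
      simpa [hyx] using h

theorem hasSunflower_of_card_filter_mem_le_one (h : ∀ x, #{S ∈ F | x ∈ S} ≤ 1) (hr : r ≤ #F) :
    HasSunflower F r := by
  obtain ⟨𝒮, h𝒮F, h𝒮⟩ := exists_subset_card_eq hr
  refine ⟨𝒮, h𝒮F, h𝒮, ∅, fun A hA B hB hAB => eq_empty_of_forall_notMem fun v hv => hAB ?_⟩
  rw [mem_inter] at hv
  exact card_le_one.mp (h v) A (mem_filter.mpr ⟨h𝒮F hA, hv.1⟩) B (mem_filter.mpr ⟨h𝒮F hB, hv.2⟩)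

theorem card_filter_mem_le_one_of_card_eq_one (h : ∀ S ∈ F, #S = 1) (x : α) :
    #{S ∈ F | x ∈ S} ≤ 1 := by
  refine card_le_one.mpr fun A hA B hB => ?_
  rw [mem_filter] at hA hB
  obtain ⟨a, rfl⟩ := card_eq_one.mp (h A hA.1)
  obtain ⟨b, rfl⟩ := card_eq_one.mp (h B hB.1)
  rw [mem_singleton] at hA hB
  rw [← hA.2, ← hB.2]

theorem IsSunflower.image_insert (h : IsSunflower r 𝒮) (hx : ∀ S ∈ 𝒮, x ∉ S) :
    IsSunflower r (𝒮.image (insert x)) := by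
  obtain ⟨h𝒮, C, hC⟩ := h
  refine ⟨by rwa [card_image_of_injOn (insert_erase_invOn.2.injOn.mono hx)], insert x C, ?_⟩
  simp only [mem_image]
  rintro _ ⟨A, hA, rfl⟩ _ ⟨B, hB, rfl⟩ hAB
  rw [← insert_inter_distrib, hC A hA B hB (ne_of_apply_ne _ hAB)]

theorem HasSunflower.mono (h : HasSunflower G r) (hGF : G ⊆ F) : HasSunflower F r :=
  let ⟨𝒮, h𝒮G, h𝒮⟩ := h
  ⟨𝒮, h𝒮G.trans hGF, h𝒮⟩

theorem HasSunflower.of_memberSubfamily (h : HasSunflower (F.memberSubfamily x) r) :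
    HasSunflower F r := by
  obtain ⟨𝒮, h𝒮, hsun⟩ := h
  refine ⟨𝒮.image (insert x), ?_, hsun.image_insert fun S hS => (mem_memberSubfamily.mp (h𝒮 hS)).2⟩
  calc 𝒮.image (insert x) ⊆ (F.memberSubfamily x).image (insert x) := image_subset_image h𝒮
    _ = {S ∈ F | x ∈ S} := image_insert_memberSubfamily F x
    _ ⊆ F := filter_subset _ F

theorem hasSunflower_of_inAlmostNoneOrAll (hk : 1 ≤ k) (hsz : ∀ S ∈ F, #S = k)
    (hF : InAlmostNoneOrAll F) (hcard : k + r - 1 ≤ #F) : HasSunflower F r := by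
  induction k, hk using Nat.le_induction generalizing F with
  | base =>
    exact hasSunflower_of_card_filter_mem_le_one
      (card_filter_mem_le_one_of_card_eq_one hsz) (by omega)
  | succ k _ ih =>
    by_cases hrare : ∀ x, #{S ∈ F | x ∈ S} ≤ 1
    · exact hasSunflower_of_card_filter_mem_le_one hrare (by omega)
    obtain ⟨x, hx⟩ := not_forall.mp hrare
    have hmiss : #(F.nonMemberSubfamily x) ≤ 1 := (hF x).resolve_left hx
    have hsplit := card_memberSubfamily_add_card_nonMemberSubfamily x F
    refine HasSunflower.of_memberSubfamily (x := x) (ih (fun S hS => ?_) ?_ (by omega))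
    · obtain ⟨hSF, hxS⟩ := mem_memberSubfamily.mp hS
      have := hsz _ hSF
      rw [card_insert_of_notMem hxS] at this
      omega
    · exact (hF.mono (filter_subset _ F)).image_erase x

end

theorem littlestone_one_sunflower_general {α : Type*} [DecidableEq α] (k r : ℕ)
    (hk : 1 ≤ k) (F : Finset (Finset α))
    (hsz : ∀ S ∈ F, S.card = k) (hls : LdimLE 1 F)
    (hcard : k + r - 1 ≤ F.card) : HasSunflower F r :=
  hasSunflower_of_inAlmostNoneOrAll hk hsz (.of_ldimLE_one hls) hcard

theorem littlestone_one_sunflower {α : Type*} [DecidableEq α] (k r : ℕ)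
    (hk : 1 ≤ k) (hr : 2 ≤ r) (F : Finset (Finset α))
    (hsz : ∀ S ∈ F, S.card = k) (hls : LdimLE 1 F)
    (hcard : k + r - 1 ≤ F.card) : HasSunflower F r :=
  littlestone_one_sunflower_general k r hk F hsz hls hcard
end

section
/- Let d ≥ 2, k, r ≥ 1 be integers, and define h^d_r(k) as the least m such that every family of k-element sets with Littlestone dimension at most d and cardinality at least m contains an r-sunflower. Then h^d_r(k) ≤ max( k(r-1)(h^{d-1}_r(k-1) - 1) + 1, h^d_r(k-1) + h^{d-1}_r(k) - 1 ). -/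
open Finset

variable {α : Type*}

/-- `hLS d r k`: the least `m` such that every family of `k`-sets with
Littlestone dimension at most `d` and cardinality at least `m` contains an
`r`-sunflower. -/
noncomputable def hLS (d r k : ℕ) : ℕ :=
  sInf {m | ∀ F : Finset (Finset ℕ), (∀ S ∈ F, S.card = k) → LdimLE d F →
    m ≤ F.card → HasSunflower F r}

/-! ### Auxiliary machinery -/

/-- The "link": erase `x` from every member containing `x`. -/
def Ex [DecidableEq α] (F : Finset (Finset α)) (x : α) : Finset (Finset α) :=
  (F.filter (fun S => x ∈ S)).image (fun S => S.erase x)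

lemma mem_Ex [DecidableEq α] {F : Finset (Finset α)} {x : α} {T : Finset α} :
    T ∈ Ex F x ↔ x ∉ T ∧ insert x T ∈ F := by
  simp only [Ex, mem_image, mem_filter]
  constructor
  · rintro ⟨S, ⟨hS, hx⟩, rfl⟩
    exact ⟨notMem_erase _ _, by rwa [insert_erase hx]⟩
  · rintro ⟨hx, hF⟩
    exact ⟨insert x T, ⟨hF, mem_insert_self _ _⟩, by rw [erase_insert hx]⟩

lemma Ex_comm [DecidableEq α] (F : Finset (Finset α)) {x y : α} (h : x ≠ y) :
    Ex (Ex F x) y = Ex (Ex F y) x := by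
  ext T
  simp only [mem_Ex, mem_insert, not_or]
  have hc : insert x (insert y T) = insert y (insert x T) := by
    ext a; simp; tauto
  rw [hc]
  tauto

lemma filter_not_Ex [DecidableEq α] (F : Finset (Finset α)) {x y : α} (h : x ≠ y) :
    (Ex F x).filter (fun S => y ∉ S) = Ex (F.filter (fun S => y ∉ S)) x := by
  ext T
  simp only [mem_Ex, mem_filter, mem_insert, not_or]
  tauto

lemma ldimLE_of_card_le_one [DecidableEq α] (d : ℕ) (F : Finset (Finset α)) (h : F.card ≤ 1) :
    LdimLE d F := by
  cases d with
  | zero => exact h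
  | succ d => exact Or.inl h

lemma card_Ex_le [DecidableEq α] (F : Finset (Finset α)) (x : α) : (Ex F x).card ≤ F.card :=
  le_trans card_image_le (card_filter_le _ _)

lemma ldimLE_Ex [DecidableEq α] :
    ∀ (d : ℕ) (F : Finset (Finset α)) (x : α), LdimLE d F → LdimLE d (Ex F x) := by
  intro d
  induction d with
  | zero => exact fun F x h => le_trans (card_Ex_le F x) h
  | succ d ih =>
    intro F x h
    rcases h with h | h
    · exact Or.inl (le_trans (card_Ex_le F x) h)
    · refine Or.inr fun y => ?_
      by_cases hxy : y = x
      · subst hxy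
        left
        apply ldimLE_of_card_le_one
        have : Ex (Ex F y) y = ∅ := by
          ext T; simp [mem_Ex]
        rw [show ((Ex F y).filter (fun S => y ∈ S)).image (fun S => S.erase y) = Ex (Ex F y) y from rfl, this]
        simp
      · rcases h y with h' | h'
        · left
          have := ih ((F.filter (fun S => y ∈ S)).image (fun S => S.erase y)) x h'
          rw [show ((F.filter (fun S => y ∈ S)).image (fun S => S.erase y)) = Ex F y from rfl] at this
          rw [show (((Ex F x).filter (fun S => y ∈ S)).image (fun S => S.erase y)) = Ex (Ex F x) y from rfl]
          rwa [Ex_comm F (Ne.symm hxy)]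
        · right
          have := ih (F.filter (fun S => y ∉ S)) x h'
          rwa [← filter_not_Ex F (fun hh => hxy hh.symm)] at this

lemma hasSunflower_of_Ex [DecidableEq α] {F : Finset (Finset α)} {x : α} {r : ℕ}
    (h : HasSunflower (Ex F x) r) : HasSunflower F r := by
  obtain ⟨𝒮, h𝒮sub, hcard, C, hC⟩ := h
  refine ⟨𝒮.image (insert x), ?_, ?_, insert x C, ?_⟩
  · intro T hT
    obtain ⟨A, hA, rfl⟩ := mem_image.1 hT
    exact (mem_Ex.1 (h𝒮sub hA)).2
  · rw [card_image_of_injOn, hcard]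
    intro A hA B hB hAB
    have hxA := (mem_Ex.1 (h𝒮sub hA)).1
    have hxB := (mem_Ex.1 (h𝒮sub hB)).1
    rw [← erase_insert hxA, ← erase_insert hxB, hAB]
  · intro A' hA' B' hB' hne
    obtain ⟨A, hA, rfl⟩ := mem_image.1 hA'
    obtain ⟨B, hB, rfl⟩ := mem_image.1 hB'
    have hAB : A ≠ B := fun h => hne (by rw [h])
    have hABC := hC A hA B hB hAB
    ext a
    simp only [mem_inter, mem_insert, ← hABC]
    tauto

lemma exists_popular [DecidableEq α] {F : Finset (Finset α)} {r k : ℕ} (x0 : α)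
    (hk : 1 ≤ k) (hsets : ∀ S ∈ F, S.card = k) (hns : ¬ HasSunflower F r) :
    ∃ x : α, F.card ≤ k * (r - 1) * (F.filter (fun S => x ∈ S)).card := by
  by_cases hFe : F = ∅
  · exact ⟨x0, by simp [hFe]⟩
  classical
  set P := F.powerset.filter (fun D => ∀ A ∈ D, ∀ B ∈ D, A ≠ B → A ∩ B = ∅) with hP
  have hPne : P.Nonempty := ⟨∅, by simp [hP]⟩
  obtain ⟨D, hDP, hDmax⟩ := exists_max_image P card hPne
  rw [hP, mem_filter, mem_powerset] at hDP
  obtain ⟨hDF, hDdisj⟩ := hDP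
  have hDr : D.card ≤ r - 1 := by
    by_contra hcon
    have hrD : r ≤ D.card := by omega
    obtain ⟨𝒮, h𝒮D, h𝒮card⟩ := exists_subset_card_eq hrD
    exact hns ⟨𝒮, h𝒮D.trans hDF, h𝒮card, ∅,
      fun A hA B hB hAB => hDdisj A (h𝒮D hA) B (h𝒮D hB) hAB⟩
  set U := D.biUnion id with hU
  have hUcard : U.card ≤ k * (r - 1) := by
    calc U.card ≤ ∑ A ∈ D, (id A).card := card_biUnion_le
    _ = ∑ A ∈ D, k := by
        apply Finset.sum_congr rfl
        intro A hA; exact hsets A (hDF hA)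
    _ = D.card * k := by rw [Finset.sum_const, smul_eq_mul]
    _ ≤ (r - 1) * k := Nat.mul_le_mul_right k hDr
    _ = k * (r - 1) := Nat.mul_comm _ _
  have hcover : ∀ S ∈ F, ∃ a ∈ U, a ∈ S := by
    intro S hSF
    by_cases hSD : S ∈ D
    · have : S.Nonempty := by
        rw [← card_pos, hsets S hSF]; omega
      obtain ⟨a, ha⟩ := this
      exact ⟨a, mem_biUnion.2 ⟨S, hSD, ha⟩, ha⟩
    · by_contra hcon
      push_neg at hcon
      have hdisjS : ∀ A ∈ D, S ∩ A = ∅ := by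
        intro A hAD
        rw [eq_empty_iff_forall_notMem]
        intro a ha
        rw [mem_inter] at ha
        exact hcon a (mem_biUnion.2 ⟨A, hAD, ha.2⟩) ha.1
      have hins : insert S D ∈ P := by
        rw [hP, mem_filter, mem_powerset]
        refine ⟨insert_subset hSF hDF, ?_⟩
        intro A hA B hB hAB
        rcases mem_insert.1 hA with rfl | hA' <;> rcases mem_insert.1 hB with rfl | hB'
        · exact absurd rfl hAB
        · exact hdisjS B hB'
        · rw [inter_comm]; exact hdisjS A hA'
        · exact hDdisj A hA' B hB' hAB
      have := hDmax _ hins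
      rw [card_insert_of_notMem hSD] at this
      omega
  have hUne : U.Nonempty := by
    obtain ⟨S, hS⟩ := nonempty_iff_ne_empty.2 hFe
    obtain ⟨a, haU, _⟩ := hcover S hS
    exact ⟨a, haU⟩
  obtain ⟨x, hxU, hxmax⟩ := exists_max_image U (fun a => (F.filter (fun S => a ∈ S)).card) hUne
  refine ⟨x, ?_⟩
  calc F.card ≤ (U.biUnion (fun a => F.filter (fun S => a ∈ S))).card := by
        apply card_le_card
        intro S hSF
        obtain ⟨a, haU, haS⟩ := hcover S hSF
        exact mem_biUnion.2 ⟨a, haU, mem_filter.2 ⟨hSF, haS⟩⟩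
    _ ≤ ∑ a ∈ U, (F.filter (fun S => a ∈ S)).card := card_biUnion_le
    _ ≤ ∑ _a ∈ U, (F.filter (fun S => x ∈ S)).card := Finset.sum_le_sum hxmax
    _ = U.card * (F.filter (fun S => x ∈ S)).card := by rw [Finset.sum_const, smul_eq_mul]
    _ ≤ k * (r - 1) * (F.filter (fun S => x ∈ S)).card :=
        Nat.mul_le_mul_right _ hUcard

/-- Working form of membership in the defining set of `hLS`. -/
def Good (d r k m : ℕ) : Prop :=
  ∀ F : Finset (Finset ℕ), (∀ S ∈ F, S.card = k) → LdimLE d F → m ≤ F.card → HasSunflower F r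

lemma good_mono {d r k m m' : ℕ} (h : Good d r k m) (hm : m ≤ m') : Good d r k m' :=
  fun F hs hl hc => h F hs hl (hm.trans hc)

lemma card_Ex [DecidableEq α] (F : Finset (Finset α)) (x : α) :
    (Ex F x).card = (F.filter (fun S => x ∈ S)).card := by
  apply card_image_of_injOn
  intro A hA B hB hAB
  rw [mem_coe, mem_filter] at hA hB
  dsimp only at hAB
  rw [← insert_erase hA.2, ← insert_erase hB.2, hAB]

lemma sets_Ex {k : ℕ} [DecidableEq α] {F : Finset (Finset α)} {x : α}
    (hsets : ∀ S ∈ F, S.card = k) : ∀ T ∈ Ex F x, T.card = k - 1 := by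
  intro T hT
  obtain ⟨hx, hF⟩ := mem_Ex.1 hT
  have := hsets _ hF
  rw [card_insert_of_notMem hx] at this
  omega

lemma step {d k r m1 m2 m3 : ℕ} (hr : 2 ≤ r) (hk : 1 ≤ k) (hm1 : 2 ≤ m1)
    (h1 : Good d r (k - 1) m1) (h2 : Good (d + 1) r (k - 1) m2) (h3 : Good d r k m3) :
    Good (d + 1) r k (max (k * (r - 1) * (m1 - 1) + 1) (m2 + m3 - 1)) := by
  intro F hsets hldF hcard
  by_contra hns
  have hA : k * (r - 1) * (m1 - 1) + 1 ≤ F.card := le_trans (le_max_left _ _) hcard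
  have hB : m2 + m3 - 1 ≤ F.card := le_trans (le_max_right _ _) hcard
  have hF2 : 2 ≤ F.card := by
    have : 1 * 1 * 1 ≤ k * (r - 1) * (m1 - 1) :=
      Nat.mul_le_mul (Nat.mul_le_mul hk (by omega)) (by omega)
    omega
  obtain ⟨x, hx⟩ := exists_popular 0 hk hsets hns
  have hcnt : m1 ≤ (F.filter (fun S => x ∈ S)).card := by
    by_contra hc
    push_neg at hc
    have : k * (r - 1) * (F.filter (fun S => x ∈ S)).card ≤ k * (r - 1) * (m1 - 1) :=
      Nat.mul_le_mul_left _ (by omega)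
    omega
  have hld := hldF
  rcases hld with hld | hld
  · omega
  rcases hld x with hld | hld
  · refine hns (hasSunflower_of_Ex (h1 (Ex F x) (sets_Ex hsets) hld ?_))
    rw [card_Ex]
    omega
  · by_cases hb : m3 ≤ (F.filter (fun S => x ∉ S)).card
    · obtain ⟨𝒮, hsub, hsf⟩ := h3 _ (fun S hS => hsets S (filter_subset _ _ hS)) hld hb
      exact hns ⟨𝒮, hsub.trans (filter_subset _ _), hsf⟩
    · push_neg at hb
      have hsum := card_filter_add_card_filter_not (s := F) (fun S => x ∈ S)
      refine hns (hasSunflower_of_Ex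
        (h2 (Ex F x) (sets_Ex hsets) (ldimLE_Ex (d + 1) F x hldF) ?_))
      rw [card_Ex]
      omega

lemma good_r_le_one (d k : ℕ) {r : ℕ} (hr : r ≤ 1) : Good d r k 1 := by
  intro F hsets hld hcard
  obtain ⟨S, hS⟩ := Finset.card_pos.1 (lt_of_lt_of_le Nat.zero_lt_one hcard)
  match r, hr with
  | 0, _ => exact ⟨∅, empty_subset _, card_empty, ∅, by simp⟩
  | 1, _ =>
    refine ⟨{S}, singleton_subset_iff.2 hS, card_singleton S, ∅, ?_⟩
    intro A hA B hB hAB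
    rw [mem_singleton] at hA hB
    exact absurd (hA.trans hB.symm) hAB

lemma good_nonempty (d r k : ℕ) : ∃ m, Good d r k m := by
  rcases le_or_gt r 1 with hr | hr
  · exact ⟨1, good_r_le_one d k hr⟩
  induction d generalizing k with
  | zero =>
    exact ⟨2, fun F hs hld hc => absurd (show F.card ≤ 1 from hld) (by omega)⟩
  | succ d ih =>
    induction k with
    | zero =>
      refine ⟨2, fun F hs hld hc => ?_⟩
      have : F.card ≤ 1 := card_le_one.2 (fun a ha b hb => by
        rw [card_eq_zero.1 (hs a ha), card_eq_zero.1 (hs b hb)])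
      omega
    | succ k ihk =>
      obtain ⟨m1, h1⟩ := ih k
      obtain ⟨m2, h2⟩ := ihk
      obtain ⟨m3, h3⟩ := ih (k + 1)
      exact ⟨_, step (by omega) (by omega) (le_max_right m1 2)
        (good_mono h1 (le_max_left m1 2)) h2 h3⟩

lemma two_le_good {d r k m : ℕ} (hr : 2 ≤ r) (h : Good d r k m) : 2 ≤ m := by
  by_contra hc
  push_neg at hc
  have hsf := h {Finset.range k} (by simp) (ldimLE_of_card_le_one d _ (by simp))
    (by simp; omega)
  obtain ⟨𝒮, hsub, hcard, _⟩ := hsf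
  have hle := card_le_card hsub
  rw [hcard, card_singleton] at hle
  omega

theorem hLS_recursion (d r k : ℕ) (hd : 2 ≤ d) (hr : 1 ≤ r) (hk : 1 ≤ k) :
    hLS d r k ≤ max (k * (r - 1) * (hLS (d - 1) r (k - 1) - 1) + 1)
      (hLS d r (k - 1) + hLS (d - 1) r k - 1) := by
  rcases lt_or_ge r 2 with hr1 | hr2
  · apply Nat.sInf_le
    exact good_mono (good_r_le_one d k (by omega))
      (le_trans (by omega) (le_max_left (k * (r - 1) * (hLS (d - 1) r (k - 1) - 1) + 1)
        (hLS d r (k - 1) + hLS (d - 1) r k - 1)))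
  · obtain ⟨d', rfl⟩ : ∃ d', d = d' + 1 := ⟨d - 1, by omega⟩
    simp only [Nat.add_sub_cancel]
    have h1 : Good d' r (k - 1) (hLS d' r (k - 1)) := Nat.sInf_mem (good_nonempty d' r (k - 1))
    have h2 : Good (d' + 1) r (k - 1) (hLS (d' + 1) r (k - 1)) :=
      Nat.sInf_mem (good_nonempty (d' + 1) r (k - 1))
    have h3 : Good d' r k (hLS d' r k) := Nat.sInf_mem (good_nonempty d' r k)
    exact Nat.sInf_le (step hr2 hk (two_le_good hr2 h1) h1 h2 h3)
end

section
/- For every integer r ≥ 2 and every k ≥ 1, there exists a family of k-element sets of cardinality (r-1)^{k-1} with VC-dimension at most 1 that contains no r-sunflower. (Construction: take the vertex sets of all root-to-leaf paths in a rooted complete (r-1)-ary tree with k levels.) -/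
open Finset

variable {α : Type*}

lemma encode_mod {a d k : ℕ} (hd : d < k) : (a * k + d) % k = d := by
  rw [Nat.mul_add_mod', Nat.mod_eq_of_lt hd]

lemma encode_div {a d k : ℕ} (hd : d < k) : (a * k + d) / k = a := by
  rw [add_comm, Nat.add_mul_div_right _ _ (by omega : 0 < k), Nat.div_eq_of_lt hd, zero_add]

def pathSet (q k n : ℕ) : Finset ℕ := (Finset.range k).image (fun d => (n % q ^ d) * k + d)

lemma mem_pathSet {q k n x : ℕ} (hk : 0 < k) :
    x ∈ pathSet q k n ↔ x / k = n % q ^ (x % k) := by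
  simp only [pathSet, mem_image, mem_range]
  constructor
  · rintro ⟨d, hd, rfl⟩
    rw [encode_mod hd, encode_div hd]
  · intro h
    exact ⟨x % k, Nat.mod_lt _ hk, by rw [← h, Nat.div_add_mod']⟩

lemma card_pathSet {q k n : ℕ} (hk : 0 < k) : (pathSet q k n).card = k := by
  rw [pathSet, Finset.card_image_of_injOn, Finset.card_range]
  intro d1 h1 d2 h2 he
  simp only [mem_coe, mem_range] at h1 h2
  have he' : n % q ^ d1 * k + d1 = n % q ^ d2 * k + d2 := he
  calc d1 = (n % q ^ d1 * k + d1) % k := (encode_mod h1).symm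
    _ = (n % q ^ d2 * k + d2) % k := by rw [he']
    _ = d2 := encode_mod h2

/-- Decode the leaf code from a path set. -/
def decP (k : ℕ) (A : Finset ℕ) : ℕ := (A.filter (fun x => x % k = k - 1)).sup (fun x => x / k)

lemma decP_pathSet {q k n : ℕ} (hk : 0 < k) (hn : n < q ^ (k - 1)) :
    decP k (pathSet q k n) = n := by
  have hfil : (pathSet q k n).filter (fun x => x % k = k - 1) = {n * k + (k - 1)} := by
    ext x
    simp only [mem_filter, mem_singleton, mem_pathSet hk]
    constructor
    · rintro ⟨hx, hm⟩
      rw [hm, Nat.mod_eq_of_lt hn] at hx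
      rw [← Nat.div_add_mod' x k, hx, hm]
    · rintro rfl
      have hd : k - 1 < k := by omega
      rw [encode_mod hd, encode_div hd, Nat.mod_eq_of_lt hn]
      exact ⟨rfl, rfl⟩
  rw [decP, hfil, Finset.sup_singleton, encode_div (by omega : k - 1 < k)]

lemma pathSet_injOn {q k : ℕ} (hk : 0 < k) {n n' : ℕ} (hn : n < q ^ (k - 1))
    (hn' : n' < q ^ (k - 1)) (h : pathSet q k n = pathSet q k n') : n = n' := by
  rw [← decP_pathSet hk hn, ← decP_pathSet hk hn', h]

/-- Structure of the intersection of two distinct path sets. -/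
lemma inter_pathSet {q k n n' : ℕ} (hk : 0 < k) (hn : n < q ^ (k - 1))
    (hn' : n' < q ^ (k - 1)) (hne : n ≠ n') :
    ∃ m, 1 ≤ m ∧ m < k ∧ (pathSet q k n ∩ pathSet q k n').card = m ∧
      (∀ d < m, n % q ^ d = n' % q ^ d) ∧ n % q ^ m ≠ n' % q ^ m := by
  have hex : ∃ d, n % q ^ d ≠ n' % q ^ d :=
    ⟨k - 1, by rw [Nat.mod_eq_of_lt hn, Nat.mod_eq_of_lt hn']; exact hne⟩
  set m := Nat.find hex with hm
  have hspec : n % q ^ m ≠ n' % q ^ m := Nat.find_spec hex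
  have hmin : ∀ d < m, n % q ^ d = n' % q ^ d := fun d hd => by
    have := Nat.find_min hex hd; simpa using this
  have hm1 : 1 ≤ m := by
    rcases Nat.eq_zero_or_pos m with h0 | h; swap; · exact h
    exact absurd (by rw [h0, pow_zero, Nat.mod_one, Nat.mod_one] : n % q ^ m = n' % q ^ m) hspec
  have hmk : m < k := by
    have : m ≤ k - 1 := Nat.find_le (by rw [Nat.mod_eq_of_lt hn, Nat.mod_eq_of_lt hn']; exact hne)
    omega
  have hmono : ∀ d, m ≤ d → n % q ^ d ≠ n' % q ^ d := by
    intro d hd he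
    apply hspec
    have h1 : n % q ^ d % q ^ m = n' % q ^ d % q ^ m := by rw [he]
    rwa [Nat.mod_mod_of_dvd _ (pow_dvd_pow q hd), Nat.mod_mod_of_dvd _ (pow_dvd_pow q hd)] at h1
  refine ⟨m, hm1, hmk, ?_, hmin, hspec⟩
  have hinter : pathSet q k n ∩ pathSet q k n'
      = (Finset.range m).image (fun d => (n % q ^ d) * k + d) := by
    ext x
    simp only [mem_inter, mem_pathSet hk, mem_image, mem_range]
    constructor
    · rintro ⟨h1, h2⟩
      have hdm : x % k < m := by
        by_contra hge
        exact hmono (x % k) (by omega) (by rw [← h1]; exact h2)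
      exact ⟨x % k, hdm, by rw [← h1, Nat.div_add_mod']⟩
    · rintro ⟨d, hd, rfl⟩
      have hdk : d < k := by omega
      rw [encode_mod hdk, encode_div hdk]
      exact ⟨rfl, (hmin d hd).symm ▸ rfl⟩
  rw [hinter, Finset.card_image_of_injOn, Finset.card_range]
  intro d1 h1 d2 h2 he
  simp only [mem_coe, mem_range] at h1 h2
  have he' : n % q ^ d1 * k + d1 = n % q ^ d2 * k + d2 := he
  calc d1 = (n % q ^ d1 * k + d1) % k := (encode_mod (by omega)).symm
    _ = (n % q ^ d2 * k + d2) % k := by rw [he']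
    _ = d2 := encode_mod (by omega)

lemma mod_pow_of_digit {q m a b : ℕ} (hm : 1 ≤ m)
    (h1 : a % q ^ (m - 1) = b % q ^ (m - 1))
    (h2 : a / q ^ (m - 1) % q = b / q ^ (m - 1) % q) : a % q ^ m = b % q ^ m := by
  obtain ⟨m', rfl⟩ : ∃ m', m = m' + 1 := ⟨m - 1, by omega⟩
  simp only [Nat.add_sub_cancel] at h1 h2
  rw [pow_succ, Nat.mod_mul, Nat.mod_mul, h1, h2]

theorem vc_one_lower (k r : ℕ) (hk : 1 ≤ k) (hr : 2 ≤ r) :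
    ∃ F : Finset (Finset ℕ), F.card = (r - 1) ^ (k - 1) ∧
      (∀ S ∈ F, S.card = k) ∧ VCdimLE F 1 ∧ ¬ HasSunflower F r := by
  set q := r - 1 with hqdef
  have hq1 : 1 ≤ q := by omega
  have hk0 : 0 < k := hk
  refine ⟨(Finset.range (q ^ (k - 1))).image (pathSet q k), ?_, ?_, ?_, ?_⟩
  · rw [Finset.card_image_of_injOn, Finset.card_range]
    intro a ha b hb h
    simp only [mem_coe, mem_range] at ha hb
    exact pathSet_injOn hk0 ha hb h
  · intro S hS
    obtain ⟨n, -, rfl⟩ := Finset.mem_image.mp hS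
    exact card_pathSet hk0
  · -- VC dimension at most 1
    intro S hS
    by_contra hcard
    push_neg at hcard
    have key : ∀ x ∈ S, ∀ y ∈ S, x ≠ y → x % k ≤ y % k → False := by
      intro x hx y hy hxy hle
      obtain ⟨A, hA, hAS⟩ := hS {x, y} (by
        intro z hz
        rcases Finset.mem_insert.mp hz with rfl | hz
        · exact hx
        · exact (Finset.mem_singleton.mp hz) ▸ hy)
      obtain ⟨n0, -, rfl⟩ := Finset.mem_image.mp hA
      have hxA : x ∈ pathSet q k n0 :=
        (Finset.mem_inter.mp (by rw [hAS]; exact Finset.mem_insert_self x {y})).1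
      have hyA : y ∈ pathSet q k n0 :=
        (Finset.mem_inter.mp (by
          rw [hAS]; exact Finset.mem_insert_of_mem (Finset.mem_singleton_self y))).1
      obtain ⟨A', hA', hA'S⟩ := hS {y} (Finset.singleton_subset_iff.mpr hy)
      obtain ⟨n', -, rfl⟩ := Finset.mem_image.mp hA'
      have hyA' : y ∈ pathSet q k n' :=
        (Finset.mem_inter.mp (by rw [hA'S]; exact Finset.mem_singleton_self y)).1
      have hxA' : x ∈ pathSet q k n' := by
        rw [mem_pathSet hk0] at hxA hyA hyA' ⊢
        calc x / k = n0 % q ^ (x % k) := hxA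
          _ = n0 % q ^ (y % k) % q ^ (x % k) :=
              (Nat.mod_mod_of_dvd _ (pow_dvd_pow q hle)).symm
          _ = n' % q ^ (y % k) % q ^ (x % k) := by rw [← hyA, hyA']
          _ = n' % q ^ (x % k) := Nat.mod_mod_of_dvd _ (pow_dvd_pow q hle)
      have : x ∈ ({y} : Finset ℕ) := by
        rw [← hA'S]; exact Finset.mem_inter.mpr ⟨hxA', hx⟩
      exact hxy (Finset.mem_singleton.mp this)
    obtain ⟨x, hx, y, hy, hxy⟩ := Finset.one_lt_card.mp hcard
    rcases le_total (x % k) (y % k) with h | h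
    · exact key x hx y hy hxy h
    · exact key y hy x hx hxy.symm h
  · -- no r-sunflower
    rintro ⟨𝒮, hsub, hcardS, C, hC⟩
    have hmem : ∀ A ∈ 𝒮, decP k A < q ^ (k - 1) ∧ pathSet q k (decP k A) = A := by
      intro A hA
      obtain ⟨n, hn, rfl⟩ := Finset.mem_image.mp (hsub hA)
      rw [decP_pathSet hk0 (Finset.mem_range.mp hn)]
      exact ⟨Finset.mem_range.mp hn, rfl⟩
    have hinj : Set.InjOn (fun A => decP k A / q ^ (C.card - 1) % q) 𝒮 := by
      intro A hA B hB he
      simp only at he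
      by_contra hne
      obtain ⟨hnA, hpA⟩ := hmem A (Finset.mem_coe.mp hA)
      obtain ⟨hnB, hpB⟩ := hmem B (Finset.mem_coe.mp hB)
      have hnne : decP k A ≠ decP k B := fun h => hne (by rw [← hpA, ← hpB, h])
      obtain ⟨m', hm1, hmk, hcard, hlt, hspec⟩ := inter_pathSet hk0 hnA hnB hnne
      have hABC : pathSet q k (decP k A) ∩ pathSet q k (decP k B) = C := by
        rw [hpA, hpB]; exact hC A (Finset.mem_coe.mp hA) B (Finset.mem_coe.mp hB) hne
      rw [hABC] at hcard
      have h1 : decP k A % q ^ (m' - 1) = decP k B % q ^ (m' - 1) := hlt _ (by omega)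
      exact hspec (mod_pow_of_digit hm1 h1 (by rw [hcard] at he; exact he))
    have hmaps : ∀ A ∈ 𝒮, (fun A => decP k A / q ^ (C.card - 1) % q) A ∈ Finset.range q :=
      fun A _ => Finset.mem_range.mpr (Nat.mod_lt _ (by omega))
    have hle := Finset.card_le_card_of_injOn _ hmaps hinj
    rw [hcardS, Finset.card_range] at hle
    omega
end

section
/- Sauer–Shelah–Perles lemma: If F is a family of subsets of a finite set V with VC-dimension at most d, then |F| ≤ Σ_{i=0}^{d} C(|V|, i). -/
open Finset

variable {α : Type*}

theorem sauer_shelah_perles {α : Type*} [DecidableEq α] [Fintype α]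
    (F : Finset (Finset α)) (d : ℕ) (h : VCdimLE F d) :
    F.card ≤ ∑ i ∈ Finset.range (d + 1), (Fintype.card α).choose i := by
  have hvc : F.vcDim ≤ d := by
    refine Finset.sup_le fun s hs => ?_
    have hsh := Finset.mem_shatterer.1 hs
    exact h s fun B hB => by
      obtain ⟨A, hA, hAB⟩ := hsh hB
      exact ⟨A, hA, by rwa [Finset.inter_comm]⟩
  calc F.card ≤ F.shatterer.card := F.card_le_card_shatterer
    _ ≤ ∑ k ∈ Finset.Iic F.vcDim, (Fintype.card α).choose k :=
        Finset.card_shatterer_le_sum_vcDim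
    _ ≤ ∑ i ∈ Finset.range (d + 1), (Fintype.card α).choose i := by
        have : Finset.range (d + 1) = Finset.Iic d := by ext x; simp [Nat.lt_succ_iff]
        rw [this]
        exact Finset.sum_le_sum_of_subset (Finset.Iic_subset_Iic.2 hvc)
end

section
/- Let F be a finite family of distinct finite sets each of size exactly k, all containing a common element v, and let F' = {S \ {v} : S ∈ F}. If F' contains an r-sunflower, then F contains an r-sunflower; moreover |F'| = |F|, every set in F' has size k-1, and λ(F') ≤ λ(F), where λ(G) is the largest l such that there exist S_1,...,S_l ∈ G with: for every i < j there is an element v_{ij} ∈ S_i ∩ S_j lying in no other S_t. -/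
open Finset

variable {α : Type*}

lemma insert_erase_mem {α : Type*} [DecidableEq α] {F : Finset (Finset α)}
    {v : α} (hv : ∀ S ∈ F, v ∈ S) {A : Finset α}
    (hA : A ∈ F.image (fun S => S.erase v)) : insert v A ∈ F ∧ v ∉ A := by
  obtain ⟨S, hS, rfl⟩ := mem_image.mp hA
  exact ⟨by rw [Finset.insert_erase (hv S hS)]; exact hS, notMem_erase _ _⟩

theorem erase_common_element {α : Type*} [DecidableEq α] (k r : ℕ)
    (F : Finset (Finset α)) (v : α) (hv : ∀ S ∈ F, v ∈ S)
    (hsz : ∀ S ∈ F, S.card = k) :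
    (HasSunflower (F.image (fun S => S.erase v)) r → HasSunflower F r) ∧
    (F.image (fun S => S.erase v)).card = F.card ∧
    (∀ S ∈ F.image (fun S => S.erase v), S.card = k - 1) ∧
    (∀ l, HasLambda (F.image (fun S => S.erase v)) l → HasLambda F l) := by
  refine ⟨?_, ?_, ?_, ?_⟩
  · rintro ⟨𝒮, h𝒮, hcard, C, hC⟩
    refine ⟨𝒮.image (insert v), ?_, ?_, insert v C, ?_⟩
    · intro A hA
      obtain ⟨B, hB, rfl⟩ := mem_image.mp hA
      exact (insert_erase_mem hv (h𝒮 hB)).1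
    · rw [← hcard]
      apply card_image_of_injOn
      intro A hA B hB hAB
      have hvA := (insert_erase_mem hv (h𝒮 hA)).2
      have hvB := (insert_erase_mem hv (h𝒮 hB)).2
      rw [← Finset.erase_insert hvA, hAB, Finset.erase_insert hvB]
    · intro A hA B hB hAB
      obtain ⟨A', hA', rfl⟩ := mem_image.mp hA
      obtain ⟨B', hB', rfl⟩ := mem_image.mp hB
      have hAB' : A' ≠ B' := by rintro rfl; exact hAB rfl
      rw [← hC A' hA' B' hB' hAB']
      ext x
      simp only [mem_inter, mem_insert]
      tauto
  · apply card_image_of_injOn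
    intro A hA B hB hAB
    simp only at hAB
    rw [← Finset.insert_erase (hv A hA), hAB, Finset.insert_erase (hv B hB)]
  · intro S hS
    obtain ⟨A, hA, rfl⟩ := mem_image.mp hS
    rw [Finset.card_erase_of_mem (hv A hA), hsz A hA]
  · rintro l ⟨S, hSmem, hSinj, hpair⟩
    refine ⟨fun i => insert v (S i), fun i => (insert_erase_mem hv (hSmem i)).1, ?_, ?_⟩
    · intro i j hij
      apply hSinj
      simp only at hij
      have hvi := (insert_erase_mem hv (hSmem i)).2
      have hvj := (insert_erase_mem hv (hSmem j)).2
      rw [← Finset.erase_insert hvi, hij, Finset.erase_insert hvj]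
    · intro i j hij
      obtain ⟨w, hwi, hwj, hwt⟩ := hpair i j hij
      have hwv : w ≠ v := fun h => (insert_erase_mem hv (hSmem i)).2 (h ▸ hwi)
      exact ⟨w, mem_insert_of_mem hwi, mem_insert_of_mem hwj,
        fun t hti htj h => (mem_insert.mp h).elim hwv (hwt t hti htj)⟩
end

section
/- If a family F of subsets of a ground set has VC-dimension at most 1, then λ(F) ≤ 3, where λ(F) is the maximum l such that there exist S_1,...,S_l ∈ F with: for every i < j there is an element of S_i ∩ S_j contained in no other S_t. -/
open Finset

variable {α : Type*}

theorem vc_one_lambda {α : Type*} [DecidableEq α] (F : Finset (Finset α))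
    (h : VCdimLE F 1) : ∀ l, HasLambda F l → l ≤ 3 := by
  intro l hl
  by_contra hcon
  push_neg at hcon
  have h4 : 4 ≤ l := hcon
  obtain ⟨S, hmem, hinj, hpriv⟩ := hl
  have lt0 : (0 : ℕ) < l := by omega
  have lt1 : (1 : ℕ) < l := by omega
  have lt2 : (2 : ℕ) < l := by omega
  have lt3 : (3 : ℕ) < l := by omega
  set i0 : Fin l := ⟨0, lt0⟩ with hi0
  set i1 : Fin l := ⟨1, lt1⟩ with hi1
  set i2 : Fin l := ⟨2, lt2⟩ with hi2
  set i3 : Fin l := ⟨3, lt3⟩ with hi3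
  obtain ⟨v, hv0, hv1, hvpriv⟩ := hpriv i0 i1 (by simp [hi0, hi1, Fin.lt_def])
  obtain ⟨w, hw0, hw2, hwpriv⟩ := hpriv i0 i2 (by simp [hi0, hi2, Fin.lt_def])
  have hv2 : v ∉ S i2 := hvpriv i2 (Fin.ne_of_val_ne (by simp [hi0, hi2]))
    (Fin.ne_of_val_ne (by simp [hi1, hi2]))
  have hv3 : v ∉ S i3 := hvpriv i3 (Fin.ne_of_val_ne (by simp [hi0, hi3]))
    (Fin.ne_of_val_ne (by simp [hi1, hi3]))
  have hw1 : w ∉ S i1 := hwpriv i1 (Fin.ne_of_val_ne (by simp [hi0, hi1]))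
    (Fin.ne_of_val_ne (by simp [hi1, hi2]))
  have hw3 : w ∉ S i3 := hwpriv i3 (Fin.ne_of_val_ne (by simp [hi0, hi3]))
    (Fin.ne_of_val_ne (by simp [hi2, hi3]))
  have hvw : v ≠ w := by
    intro e; subst e; exact hv2 hw2
  have hsh : ShattersFam F {v, w} := by
    intro B hB
    by_cases hv' : v ∈ B <;> by_cases hw' : w ∈ B
    · refine ⟨S i0, hmem i0, ?_⟩
      have hBeq : B = {v, w} :=
        Finset.Subset.antisymm hB (Finset.insert_subset hv' (Finset.singleton_subset_iff.2 hw'))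
      rw [hBeq]
      ext x
      simp only [Finset.mem_inter, Finset.mem_insert, Finset.mem_singleton]
      constructor
      · exact fun h' => h'.2
      · rintro (rfl | rfl)
        · exact ⟨hv0, Or.inl rfl⟩
        · exact ⟨hw0, Or.inr rfl⟩
    · refine ⟨S i1, hmem i1, ?_⟩
      have hBeq : B = {v} := by
        apply Finset.Subset.antisymm _ (Finset.singleton_subset_iff.2 hv')
        intro x hx
        rcases Finset.mem_insert.1 (hB hx) with h' | h'
        · simpa using h'
        · exact absurd (Finset.mem_singleton.1 h' ▸ hx) hw'
      rw [hBeq]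
      ext x
      simp only [Finset.mem_inter, Finset.mem_insert, Finset.mem_singleton]
      constructor
      · rintro ⟨hxs, rfl | rfl⟩
        · rfl
        · exact absurd hxs hw1
      · rintro rfl; exact ⟨hv1, Or.inl rfl⟩
    · refine ⟨S i2, hmem i2, ?_⟩
      have hBeq : B = {w} := by
        apply Finset.Subset.antisymm _ (Finset.singleton_subset_iff.2 hw')
        intro x hx
        rcases Finset.mem_insert.1 (hB hx) with h' | h'
        · exact absurd (h' ▸ hx) hv'
        · simpa using h'
      rw [hBeq]
      ext x
      simp only [Finset.mem_inter, Finset.mem_insert, Finset.mem_singleton]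
      constructor
      · rintro ⟨hxs, rfl | rfl⟩
        · exact absurd hxs hv2
        · rfl
      · rintro rfl; exact ⟨hw2, Or.inr rfl⟩
    · refine ⟨S i3, hmem i3, ?_⟩
      have hBeq : B = ∅ := by
        apply Finset.eq_empty_of_forall_notMem
        intro x hx
        rcases Finset.mem_insert.1 (hB hx) with h' | h'
        · exact hv' (h' ▸ hx)
        · exact hw' (Finset.mem_singleton.1 h' ▸ hx)
      rw [hBeq]
      apply Finset.eq_empty_of_forall_notMem
      intro x hx
      obtain ⟨hxs, hxm⟩ := Finset.mem_inter.1 hx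
      rcases Finset.mem_insert.1 hxm with rfl | h'
      · exact hv3 hxs
      · exact hw3 (Finset.mem_singleton.1 h' ▸ hxs)
  have hc := h {v, w} hsh
  rw [Finset.card_insert_of_notMem (by simpa using hvw), Finset.card_singleton] at hc
  omega
end
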